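/- arXiv:2110.15093 — 5 statements merged into one kernel-verified Lean document; each statement's English description precedes it below -/
import Mathlib

section
/- For every initial state-action pair (s,a), the value Q_0(s,a) produced by the finite-horizon dynamic programming backward recursion equals the optimal Q-value Q*(s,a) = min over all policies π of Q_π(s,a). -/
open Finset

noncomputable section

/-- The state at time `k` of the trajectory with initial state `i` and
subsequent states `τ 0, …, τ (N-1)` (so `traj N i τ k = s_k`). -/
def traj {S : Type*} (N : ℕ) (i : S) (τ : Fin N → S) : ℕ → S
  | 0 => i
  | m + 1 => if h : m < N then τ ⟨m, h⟩ else i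

/-- `Qpol N p g gN pol i a` is the expected total cost over the horizon `N`
when starting in state `i`, taking initial action `a`, and thereafter following
the policy `pol`. -/
def Qpol {S A : Type*} [Fintype S] [DecidableEq S] [Fintype A] (N : ℕ)
    (p g : ℕ → S → A → S → ℝ) (gN : S → ℝ) (pol : ℕ → S → A) (i : S) (a : A) : ℝ :=
  ∑ τ : Fin N → S,
    (∏ k : Fin N,
        p k (traj N i τ k) (if (k : ℕ) = 0 then a else pol k (traj N i τ k))
          (traj N i τ (k + 1))) *
      ((∑ k : Fin N,
          g k (traj N i τ k) (if (k : ℕ) = 0 then a else pol k (traj N i τ k))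
            (traj N i τ (k + 1))) + gN (traj N i τ N))

lemma traj_zero {S : Type*} (N : ℕ) (i : S) (τ : Fin N → S) : traj N i τ 0 = i := rfl

lemma traj_cons {S : Type*} (M : ℕ) (i j : S) (σ : Fin M → S) (m : ℕ) (hm : m ≤ M) :
    traj (M + 1) i (Fin.cons j σ) (m + 1) = traj M j σ m := by
  cases m with
  | zero => simp [traj]
  | succ m' =>
    have h1 : m' + 1 < M + 1 := by omega
    have h2 : m' < M := by omega
    have : (⟨m' + 1, h1⟩ : Fin (M + 1)) = Fin.succ ⟨m', h2⟩ := rfl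
    simp only [traj, dif_pos h1, dif_pos h2, this, Fin.cons_succ]

/-- Decompose a sum over `(Fin (M+1) → S)` as a double sum. -/
lemma sum_pi_succ {S : Type*} [Fintype S] [DecidableEq S] (M : ℕ)
    (F : (Fin (M + 1) → S) → ℝ) :
    ∑ τ : Fin (M + 1) → S, F τ = ∑ j : S, ∑ σ : Fin M → S, F (Fin.cons j σ) := by
  rw [← (Fin.consEquiv (fun _ : Fin (M + 1) => S)).sum_comp F, Fintype.sum_prod_type]
  rfl

/-- Probabilities of trajectories sum to one. -/
lemma sum_prod_traj {S : Type*} [Fintype S] [DecidableEq S] :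
    ∀ (M : ℕ) (q : ℕ → S → S → ℝ), (∀ n < M, ∀ i : S, ∑ j, q n i j = 1) → ∀ i : S,
      ∑ σ : Fin M → S, ∏ k : Fin M, q k (traj M i σ k) (traj M i σ (k + 1)) = 1 := by
  intro M
  induction M with
  | zero => intro q _ i; simp
  | succ M ih =>
    intro q hq i
    rw [sum_pi_succ]
    have key : ∀ j : S, ∀ σ : Fin M → S,
        (∏ k : Fin (M + 1), q k (traj (M + 1) i (Fin.cons j σ) k)
          (traj (M + 1) i (Fin.cons j σ) (k + 1)))
        = q 0 i j * ∏ k : Fin M, (fun n => q (n + 1)) k (traj M j σ k) (traj M j σ (k + 1)) := by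
      intro j σ
      rw [Fin.prod_univ_succ]
      congr 1
      · apply Finset.prod_congr rfl
        intro k _
        have hv : ((Fin.succ k : Fin (M + 1)) : ℕ) = (k : ℕ) + 1 := rfl
        rw [hv, traj_cons M i j σ k (le_of_lt k.isLt),
          traj_cons M i j σ ((k : ℕ) + 1) (by omega)]
    calc ∑ j : S, ∑ σ : Fin M → S,
          (∏ k : Fin (M + 1), q k (traj (M + 1) i (Fin.cons j σ) k)
            (traj (M + 1) i (Fin.cons j σ) (k + 1)))
        = ∑ j : S, ∑ σ : Fin M → S,
            q 0 i j * ∏ k : Fin M,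
              (fun n => q (n + 1)) k (traj M j σ k) (traj M j σ (k + 1)) := by
          apply Finset.sum_congr rfl; intro j _
          apply Finset.sum_congr rfl; intro σ _
          exact key j σ
      _ = ∑ j : S, q 0 i j * ∑ σ : Fin M → S, ∏ k : Fin M,
              (fun n => q (n + 1)) k (traj M j σ k) (traj M j σ (k + 1)) := by
          simp [Finset.mul_sum]
      _ = ∑ j : S, q 0 i j * 1 := by
          apply Finset.sum_congr rfl; intro j _
          rw [ih (fun n => q (n + 1)) (fun n hn i' => hq (n + 1) (by omega) i') j]
      _ = 1 := by simpa using hq 0 (by omega) i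

lemma Qpol_zero {S A : Type*} [Fintype S] [DecidableEq S] [Fintype A]
    (p g : ℕ → S → A → S → ℝ) (gN : S → ℝ) (pol : ℕ → S → A) (i : S) (a : A) :
    Qpol 0 p g gN pol i a = gN i := by
  simp [Qpol, traj_zero]

/-- `Qpol` only depends on the policy at stages `1, …, N-1`. -/
lemma Qpol_congr {S A : Type*} [Fintype S] [DecidableEq S] [Fintype A] (N : ℕ)
    (p g : ℕ → S → A → S → ℝ) (gN : S → ℝ) (pol1 pol2 : ℕ → S → A)
    (h : ∀ k, 0 < k → k < N → ∀ s, pol1 k s = pol2 k s) (i : S) (a : A) :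
    Qpol N p g gN pol1 i a = Qpol N p g gN pol2 i a := by
  unfold Qpol
  apply Finset.sum_congr rfl
  intro τ _
  congr 1
  · apply Finset.prod_congr rfl
    intro k _
    by_cases hk : (k : ℕ) = 0
    · simp [hk]
    · rw [if_neg hk, if_neg hk, h k (Nat.pos_of_ne_zero hk) k.isLt]
  · congr 1
    apply Finset.sum_congr rfl
    intro k _
    by_cases hk : (k : ℕ) = 0
    · simp [hk]
    · rw [if_neg hk, if_neg hk, h k (Nat.pos_of_ne_zero hk) k.isLt]

/-- One-step recursion for `Qpol`. -/
lemma Qpol_succ {S A : Type*} [Fintype S] [DecidableEq S] [Fintype A] (M : ℕ)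
    (p g : ℕ → S → A → S → ℝ) (gN : S → ℝ) (pol : ℕ → S → A)
    (hp1 : ∀ n < M + 1, ∀ (i : S) (a : A), ∑ j, p n i a j = 1) (i : S) (a : A) :
    Qpol (M + 1) p g gN pol i a =
      ∑ j, p 0 i a j * (g 0 i a j +
        Qpol M (fun n => p (n + 1)) (fun n => g (n + 1)) gN (fun n => pol (n + 1)) j
          (pol 1 j)) := by
  unfold Qpol
  rw [sum_pi_succ]
  apply Finset.sum_congr rfl
  intro j _
  -- abbreviations for the tail quantities
  set P : (Fin M → S) → ℝ := fun σ => ∏ k : Fin M,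
      p ((k : ℕ) + 1) (traj M j σ k) (pol ((k : ℕ) + 1) (traj M j σ k)) (traj M j σ ((k : ℕ) + 1))
    with hP
  set G : (Fin M → S) → ℝ := fun σ => ∑ k : Fin M,
      g ((k : ℕ) + 1) (traj M j σ k) (pol ((k : ℕ) + 1) (traj M j σ k)) (traj M j σ ((k : ℕ) + 1))
    with hG
  set T : (Fin M → S) → ℝ := fun σ => gN (traj M j σ M) with hT
  have hPsum : ∑ σ : Fin M → S, P σ = 1 := by
    have := sum_prod_traj M
      (fun n s s' => p (n + 1) s (pol (n + 1) s) s')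
      (fun n hn s => hp1 (n + 1) (by omega) s (pol (n + 1) s)) j
    simpa [hP] using this
  have hprod : ∀ σ : Fin M → S,
      (∏ k : Fin (M + 1),
        p k (traj (M + 1) i (Fin.cons j σ) k)
          (if (k : ℕ) = 0 then a else pol k (traj (M + 1) i (Fin.cons j σ) k))
          (traj (M + 1) i (Fin.cons j σ) (k + 1)))
      = p 0 i a j * P σ := by
    intro σ
    rw [Fin.prod_univ_succ]
    congr 1
    · apply Finset.prod_congr rfl
      intro k _
      have hv : ((Fin.succ k : Fin (M + 1)) : ℕ) = (k : ℕ) + 1 := rfl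
      rw [hv, if_neg (Nat.succ_ne_zero _), traj_cons M i j σ k (le_of_lt k.isLt),
        traj_cons M i j σ ((k : ℕ) + 1) (by omega)]
  have hsum : ∀ σ : Fin M → S,
      ((∑ k : Fin (M + 1),
        g k (traj (M + 1) i (Fin.cons j σ) k)
          (if (k : ℕ) = 0 then a else pol k (traj (M + 1) i (Fin.cons j σ) k))
          (traj (M + 1) i (Fin.cons j σ) (k + 1)))
        + gN (traj (M + 1) i (Fin.cons j σ) (M + 1)))
      = (g 0 i a j + G σ) + T σ := by
    intro σ
    rw [Fin.sum_univ_succ, traj_cons M i j σ M (le_refl M)]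
    congr 2
    · apply Finset.sum_congr rfl
      intro k _
      have hv : ((Fin.succ k : Fin (M + 1)) : ℕ) = (k : ℕ) + 1 := rfl
      rw [hv, if_neg (Nat.succ_ne_zero _), traj_cons M i j σ k (le_of_lt k.isLt),
        traj_cons M i j σ ((k : ℕ) + 1) (by omega)]
  have htail : Qpol M (fun n => p (n + 1)) (fun n => g (n + 1)) gN (fun n => pol (n + 1)) j
      (pol 1 j) = ∑ σ : Fin M → S, P σ * (G σ + T σ) := by
    unfold Qpol
    apply Finset.sum_congr rfl
    intro σ _
    have hact : ∀ k : Fin M,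
        (if (k : ℕ) = 0 then pol 1 j else pol ((k : ℕ) + 1) (traj M j σ k))
        = pol ((k : ℕ) + 1) (traj M j σ k) := by
      intro k
      by_cases hk : (k : ℕ) = 0
      · rw [if_pos hk, hk]; rfl
      · rw [if_neg hk]
    congr 1
    · apply Finset.prod_congr rfl
      intro k _
      rw [hact k]
    · rw [hG]
      congr 1
      apply Finset.sum_congr rfl
      intro k _
      rw [hact k]
  calc ∑ σ : Fin M → S,
        (∏ k : Fin (M + 1),
          p k (traj (M + 1) i (Fin.cons j σ) k)
            (if (k : ℕ) = 0 then a else pol k (traj (M + 1) i (Fin.cons j σ) k))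
            (traj (M + 1) i (Fin.cons j σ) (k + 1))) *
        ((∑ k : Fin (M + 1),
          g k (traj (M + 1) i (Fin.cons j σ) k)
            (if (k : ℕ) = 0 then a else pol k (traj (M + 1) i (Fin.cons j σ) k))
            (traj (M + 1) i (Fin.cons j σ) (k + 1))) +
          gN (traj (M + 1) i (Fin.cons j σ) (M + 1)))
      = ∑ σ : Fin M → S, (p 0 i a j * P σ) * ((g 0 i a j + G σ) + T σ) := by
        apply Finset.sum_congr rfl
        intro σ _
        rw [hprod σ, hsum σ]
    _ = ∑ σ : Fin M → S,
          (p 0 i a j * g 0 i a j * P σ + p 0 i a j * (P σ * (G σ + T σ))) := by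
        apply Finset.sum_congr rfl
        intro σ _
        ring
    _ = p 0 i a j * g 0 i a j * (∑ σ : Fin M → S, P σ)
          + p 0 i a j * ∑ σ : Fin M → S, P σ * (G σ + T σ) := by
        rw [Finset.sum_add_distrib, ← Finset.mul_sum, ← Finset.mul_sum]
    _ = p 0 i a j * (g 0 i a j +
        Qpol M (fun n => p (n + 1)) (fun n => g (n + 1)) gN (fun n => pol (n + 1)) j
          (pol 1 j)) := by
        rw [hPsum, htail]; ring

/-- Main auxiliary lemma: the DP recursion value at stage 0 is attained by a policy
and is a lower bound over all policies. -/
lemma dp_key {S A : Type*} [Fintype S] [DecidableEq S] [Fintype A] [Nonempty A] :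
    ∀ (N : ℕ) (p g : ℕ → S → A → S → ℝ) (gN : S → ℝ),
      (∀ n < N, ∀ (i : S) (a : A) (j : S), 0 ≤ p n i a j) →
      (∀ n < N, ∀ (i : S) (a : A), ∑ j, p n i a j = 1) →
      ∀ (Q : ℕ → S → A → ℝ), (∀ s a, Q N s a = gN s) →
      (∀ k < N, ∀ s a, Q k s a = ∑ j, p k s a j * (g k s a j + ⨅ b, Q (k + 1) j b)) →
      (∃ pol : ℕ → S → A, ∀ i a, Qpol N p g gN pol i a = Q 0 i a) ∧
      (∀ (pol : ℕ → S → A) (i : S) (a : A), Q 0 i a ≤ Qpol N p g gN pol i a) := by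
  intro N
  induction N with
  | zero =>
    intro p g gN _ _ Q hQN _
    constructor
    · exact ⟨fun _ _ => Classical.arbitrary A, fun i a => by rw [Qpol_zero, hQN]⟩
    · intro pol i a; rw [Qpol_zero, hQN]
  | succ M ih =>
    intro p g gN hp0 hp1 Q hQN hQrec
    -- shifted data
    obtain ⟨⟨pol', hpol'⟩, hlb'⟩ := ih (fun n => p (n + 1)) (fun n => g (n + 1)) gN
      (fun n hn => hp0 (n + 1) (by omega)) (fun n hn => hp1 (n + 1) (by omega))
      (fun k => Q (k + 1)) (fun s a => hQN s a)
      (fun k hk s a => hQrec (k + 1) (by omega) s a)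
    -- the greedy first-stage action
    have hmin : ∀ j : S, ∃ b : A, ∀ b' : A, Q 1 j b ≤ Q 1 j b' := fun j =>
      Finite.exists_min (fun b => Q 1 j b)
    choose bstar hbstar using hmin
    have hinf : ∀ j : S, (⨅ b, Q 1 j b) = Q 1 j (bstar j) := by
      intro j
      refine le_antisymm (ciInf_le (Finite.bddBelow_range _) _) (le_ciInf (hbstar j))
    have hinf_le : ∀ (j : S) (b : A), (⨅ b', Q 1 j b') ≤ Q 1 j b := by
      intro j b
      exact ciInf_le (Finite.bddBelow_range _) b
    constructor
    · -- the optimal policy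
      refine ⟨fun n s => if n ≤ 1 then bstar s else pol' (n - 1) s, ?_⟩
      intro i a
      rw [Qpol_succ M p g gN _ hp1 i a]
      rw [hQrec 0 (by omega) i a]
      apply Finset.sum_congr rfl
      intro j _
      congr 1
      congr 1
      have hshift : Qpol M (fun n => p (n + 1)) (fun n => g (n + 1)) gN
          (fun n s => if n + 1 ≤ 1 then bstar s else pol' (n + 1 - 1) s) j
          ((fun n s => if n ≤ 1 then bstar s else pol' (n - 1) s) 1 j)
          = Qpol M (fun n => p (n + 1)) (fun n => g (n + 1)) gN pol' j (bstar j) := by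
        have : ((fun n s => if n ≤ 1 then bstar s else pol' (n - 1) s) 1 j) = bstar j := by
          simp
        rw [this]
        apply Qpol_congr
        intro k hk0 _ s
        have : ¬ (k + 1 ≤ 1) := by omega
        simp [this]
      rw [hshift, hpol' j (bstar j), hinf j]
    · intro pol i a
      rw [Qpol_succ M p g gN pol hp1 i a, hQrec 0 (by omega) i a]
      apply Finset.sum_le_sum
      intro j _
      apply mul_le_mul_of_nonneg_left _ (hp0 0 (by omega) i a j)
      apply add_le_add le_rfl
      calc (⨅ b, Q 1 j b) ≤ Q 1 j (pol 1 j) := hinf_le j (pol 1 j)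
        _ ≤ Qpol M (fun n => p (n + 1)) (fun n => g (n + 1)) gN (fun n => pol (n + 1)) j
            (pol 1 j) := hlb' (fun n => pol (n + 1)) j (pol 1 j)

/-- the stage-0 value of the finite-horizon DP backward recursion equals
the optimal Q-value `Q*(s,a) = min_π Q_π(s,a)`. -/
theorem dp_eq_optimal_Q {S A : Type*} [Fintype S] [DecidableEq S] [Nonempty S]
    [Fintype A] [Nonempty A]
    (N : ℕ) (hN : 1 ≤ N)
    (p g : ℕ → S → A → S → ℝ) (gN : S → ℝ)
    (hp0 : ∀ n < N, ∀ i a j, 0 ≤ p n i a j)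
    (hp1 : ∀ n < N, ∀ i a, ∑ j, p n i a j = 1)
    (Q : ℕ → S → A → ℝ)
    (hQN : ∀ s a, Q N s a = gN s)
    (hQrec : ∀ k < N, ∀ s a,
      Q k s a = ∑ j, p k s a j * (g k s a j + ⨅ b, Q (k + 1) j b))
    (s : S) (a : A) :
    Q 0 s a = ⨅ pol : ℕ → S → A, Qpol N p g gN pol s a := by
  obtain ⟨⟨pol, hpol⟩, hlb⟩ := dp_key N p g gN hp0 hp1 Q hQN hQrec
  refine le_antisymm ?_ ?_
  · exact le_ciInf (fun pol' => hlb pol' s a)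
  · have hbdd : BddBelow (Set.range fun pol : ℕ → S → A => Qpol N p g gN pol s a) :=
      ⟨Q 0 s a, by rintro x ⟨pol', rfl⟩; exact hlb pol' s a⟩
    calc (⨅ pol : ℕ → S → A, Qpol N p g gN pol s a) ≤ Qpol N p g gN pol s a :=
        ciInf_le hbdd pol
      _ = Q 0 s a := hpol s a

end
end

section
/- Let G = max over n ∈ {0,…,N−1} and (i,a,j) ∈ S×A×S of |g_n(i,a,j)|. Then for every r ≥ 1 and every Q ∈ ℝ^d, ‖h_r(Q) − h_∞(Q)‖ ≤ G/r, where h_r(Q) = h(rQ)/r. In particular h_r converges to h_∞ uniformly on ℝ^d (hence uniformly on compact sets) as r → ∞. -/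
/-!
The field `h` is `h(0)` plus the positively homogeneous field `h_∞`, so
`h_r(Q) = h(rQ)/r = h_∞(Q) + h(0)/r` exactly. Each coordinate of `h(0)` with `n < N` is an
average of single-stage costs under `p_n(i,a,·)`, hence `‖h(0)‖ ≤ G`, and the bound `G/r`
tends to `0` independently of `Q`.
-/

open Finset

noncomputable section

/-- The finite-horizon Q-learning vector field `h`. -/
def hvec {S A : Type*} [Fintype S] [Fintype A] [Nonempty A] (N : ℕ)
    (p g : ℕ → S → A → S → ℝ)
    (Q : Fin (N + 1) × S × A → ℝ) : Fin (N + 1) × S × A → ℝ :=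
  fun x =>
    if h : (x.1 : ℕ) < N then
      (∑ j, p x.1 x.2.1 x.2.2 j *
        (g x.1 x.2.1 x.2.2 j + ⨅ b : A, Q (⟨(x.1 : ℕ) + 1, by omega⟩, j, b)))
        - Q x
    else 0

/-- The limiting finite-horizon Q-learning vector field `h_∞`. -/
def hinf {S A : Type*} [Fintype S] [Fintype A] [Nonempty A] (N : ℕ)
    (p : ℕ → S → A → S → ℝ)
    (Q : Fin (N + 1) × S × A → ℝ) : Fin (N + 1) × S × A → ℝ :=
  fun x =>
    if h : (x.1 : ℕ) < N then
      (∑ j, p x.1 x.2.1 x.2.2 j * ⨅ b : A, Q (⟨(x.1 : ℕ) + 1, by omega⟩, j, b))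
        - Q x
    else 0

theorem tendstoUniformly_of_dist_le_of_tendsto_zero {ι α β : Type*} [PseudoMetricSpace β]
    {F : ι → α → β} {f : α → β} {l : Filter ι} {u : ι → ℝ} (hu : Filter.Tendsto u l (nhds 0))
    (h : ∀ᶠ i in l, ∀ x, dist (f x) (F i x) ≤ u i) : TendstoUniformly F f l :=
  Metric.tendstoUniformly_iff.2 fun _ hε =>
    (h.and (hu.eventually (gt_mem_nhds hε))).mono fun _ hi x => (hi.1 x).trans_lt hi.2

section QLearning

variable {S A : Type*} [Fintype S] [Fintype A] [Nonempty A] {N : ℕ} (p g : ℕ → S → A → S → ℝ)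

theorem hvec_eq_hvec_zero_add_hinf (Q : Fin (N + 1) × S × A → ℝ) :
    hvec N p g Q = hvec N p g 0 + hinf N p Q := by
  ext ⟨n, i, a⟩
  simp only [hvec, hinf, Pi.add_apply, Pi.zero_apply, ciInf_const]
  split_ifs
  · simp only [mul_add, sum_add_distrib, add_zero, sub_zero]
    ring
  · simp

theorem hinf_smul {r : ℝ} (hr : 0 ≤ r) (Q : Fin (N + 1) × S × A → ℝ) :
    hinf N p (r • Q) = r • hinf N p Q := by
  ext ⟨n, i, a⟩
  simp only [hinf, Pi.smul_apply, smul_eq_mul, ← Real.mul_iInf_of_nonneg hr]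
  split_ifs
  · simp only [mul_sub, mul_sum]
    congr 1
    exact sum_congr rfl fun _ _ => by ring
  · simp

theorem inv_smul_hvec_smul {r : ℝ} (hr : 0 < r) (Q : Fin (N + 1) × S × A → ℝ) :
    r⁻¹ • hvec N p g (r • Q) = hinf N p Q + r⁻¹ • hvec N p g 0 := by
  rw [hvec_eq_hvec_zero_add_hinf, hinf_smul p hr.le, smul_add, inv_smul_smul₀ hr.ne']
  exact add_comm _ _

variable {p g} in
theorem norm_hvec_zero_le {G : ℝ} (hp0 : ∀ n < N, ∀ i a j, 0 ≤ p n i a j)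
    (hp1 : ∀ n < N, ∀ i a, ∑ j, p n i a j = 1) (hg : ∀ n < N, ∀ i a j, |g n i a j| ≤ G)
    (hG : 0 ≤ G) : ‖hvec N p g (0 : Fin (N + 1) × S × A → ℝ)‖ ≤ G := by
  refine (pi_norm_le_iff_of_nonneg hG).2 fun ⟨n, i, a⟩ => ?_
  simp only [hvec, Pi.zero_apply, ciInf_const, add_zero, sub_zero]
  split_ifs with hn
  · -- a convex combination of points of the ball `closedBall 0 G` stays in it
    simpa [← smul_eq_mul] using (convex_closedBall (0 : ℝ) G).sum_mem
      (fun j _ => hp0 n hn i a j) (hp1 n hn i a)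
      (fun j _ => mem_closedBall_zero_iff.2 (hg n hn i a j))
  · simpa using hG

end QLearning

/-- with `G = max_{n < N, i, a, j} |g_n(i,a,j)|`, the rescaled fields
satisfy `‖h_r(Q) − h_∞(Q)‖ ≤ G/r` for all `r ≥ 1` and all `Q`; in particular
`h_r → h_∞` uniformly on `ℝ^d` as `r → ∞`. -/
theorem hvec_rescaled_tendsto_hinf {S A : Type*} [Fintype S]
    [Fintype A] [Nonempty A]
    (N : ℕ) (hN : 1 ≤ N)
    (p g : ℕ → S → A → S → ℝ)
    (hp0 : ∀ n < N, ∀ i a j, 0 ≤ p n i a j)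
    (hp1 : ∀ n < N, ∀ i a, ∑ j, p n i a j = 1)
    (G : ℝ)
    (hG : haveI : Nonempty (Fin N) := Fin.pos_iff_nonempty.mp (by omega)
      G = ⨆ x : Fin N × S × A × S, |g x.1 x.2.1 x.2.2.1 x.2.2.2|) :
    (∀ r : ℝ, 1 ≤ r → ∀ Q : Fin (N + 1) × S × A → ℝ,
        ‖r⁻¹ • hvec N p g (r • Q) - hinf N p Q‖ ≤ G / r) ∧
      TendstoUniformly (fun (r : ℝ) (Q : Fin (N + 1) × S × A → ℝ) =>
          r⁻¹ • hvec N p g (r • Q))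
        (hinf N p) Filter.atTop := by
  have hg : ∀ n < N, ∀ i a j, |g n i a j| ≤ G := fun n hn i a j => by
    rw [hG]
    exact le_ciSup (f := fun x : Fin N × S × A × S => |g x.1 x.2.1 x.2.2.1 x.2.2.2|)
      (Finite.bddAbove_range _) (⟨n, hn⟩, i, a, j)
  have hG0 : 0 ≤ G := by
    rw [hG]
    exact Real.iSup_nonneg fun _ => abs_nonneg _
  have bound : ∀ r : ℝ, 1 ≤ r → ∀ Q : Fin (N + 1) × S × A → ℝ,
      ‖r⁻¹ • hvec N p g (r • Q) - hinf N p Q‖ ≤ G / r := by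
    intro r hr Q
    have hr0 : 0 < r := by linarith
    rw [inv_smul_hvec_smul p g hr0, add_sub_cancel_left, norm_smul, norm_inv,
      Real.norm_of_nonneg hr0.le, inv_mul_eq_div]
    gcongr
    exact norm_hvec_zero_le hp0 hp1 hg hG0
  refine ⟨bound, tendstoUniformly_of_dist_le_of_tendsto_zero (u := (G / ·))
    (tendsto_const_nhds.div_atTop Filter.tendsto_id) ?_⟩
  filter_upwards [Filter.eventually_ge_atTop 1] with r hr Q
  rw [dist_eq_norm']
  exact bound r hr Q

end
end

section
/- Every solution of the ODE Q̇(t) = h(Q(t)) with correct terminal components converges to the DP solution: if γ : ℝ → ℝ^d is differentiable with γ'(t) = h(γ(t)) for all t ≥ 0 and the terminal components of the initial condition satisfy γ_N(0)(i,a) = g_N(i) for all (i,a), then γ(t) → Q* as t → ∞. -/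
open Finset Filter

noncomputable section

/-- Scalar linear ODE with converging forcing term: solutions of `x' = f - x` with
`f → L` satisfy `x → L`. -/
lemma ode_scalar_tendsto (x f : ℝ → ℝ) (L : ℝ)
    (hx : ∀ t : ℝ, 0 ≤ t → HasDerivAt x (f t - x t) t)
    (hf : Tendsto f atTop (nhds L)) : Tendsto x atTop (nhds L) := by
  set G : ℝ → ℝ := fun t => Real.exp t * (x t - L) with hG
  have hg : ∀ t : ℝ, 0 ≤ t → HasDerivAt G (Real.exp t * (f t - L)) t := by
    intro t ht
    have h1 : HasDerivAt G (Real.exp t * (x t - L) + Real.exp t * (f t - x t)) t :=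
      (Real.hasDerivAt_exp t).mul ((hx t ht).sub_const L)
    convert h1 using 1; ring
  rw [Metric.tendsto_atTop] at hf ⊢
  intro ε hε
  obtain ⟨T0, hT0⟩ := hf (ε / 4) (by positivity)
  set T : ℝ := max T0 0 with hTdef
  have hT0' : (0 : ℝ) ≤ T := le_max_right _ _
  -- on `[T, ∞)`, `|f t - L| ≤ ε/4`
  have hfb : ∀ t : ℝ, T ≤ t → |f t - L| ≤ ε / 4 := by
    intro t ht
    have := hT0 t (le_trans (le_max_left _ _) ht)
    rw [Real.dist_eq] at this; linarith [this]
  have hmemint : ∀ s : ℝ, s ∈ interior (Set.Ici T) → T < s := by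
    intro s hs; rwa [interior_Ici, Set.mem_Ioi] at hs
  have hcontG : ContinuousOn G (Set.Ici T) := by
    intro s hs
    exact ((hg s (le_trans hT0' hs)).continuousAt).continuousWithinAt
  -- upper bound: `t ↦ (ε/4) * exp t - G t` is monotone on `[T, ∞)`
  have hup : MonotoneOn (fun t => (ε / 4) * Real.exp t - G t) (Set.Ici T) := by
    apply monotoneOn_of_hasDerivWithinAt_nonneg (convex_Ici T)
      (Continuous.continuousOn (by continuity) |>.mul (Real.continuous_exp.continuousOn) |>.sub hcontG)
      (f' := fun s => (ε / 4) * Real.exp s - Real.exp s * (f s - L))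
    · intro s hs
      have hsT := hmemint s hs
      exact (((Real.hasDerivAt_exp s).const_mul (ε / 4)).sub
        (hg s (le_trans hT0' hsT.le))).hasDerivWithinAt
    · intro s hs
      have hsT := hmemint s hs
      have h1 := hfb s hsT.le
      have h2 : f s - L ≤ ε / 4 := le_trans (le_abs_self _) h1
      have h3 : (0 : ℝ) < Real.exp s := Real.exp_pos s
      nlinarith
  have hdown : MonotoneOn (fun t => (ε / 4) * Real.exp t + G t) (Set.Ici T) := by
    apply monotoneOn_of_hasDerivWithinAt_nonneg (convex_Ici T)
      (Continuous.continuousOn (by continuity) |>.mul (Real.continuous_exp.continuousOn) |>.add hcontG)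
      (f' := fun s => (ε / 4) * Real.exp s + Real.exp s * (f s - L))
    · intro s hs
      have hsT := hmemint s hs
      exact (((Real.hasDerivAt_exp s).const_mul (ε / 4)).add
        (hg s (le_trans hT0' hsT.le))).hasDerivWithinAt
    · intro s hs
      have hsT := hmemint s hs
      have h1 := hfb s hsT.le
      have h2 : -(ε / 4) ≤ f s - L := neg_le_of_abs_le h1
      have h3 : (0 : ℝ) < Real.exp s := Real.exp_pos s
      nlinarith
  -- hence `|G t| ≤ |G T| + (ε/4) * exp t`
  have hGb : ∀ t : ℝ, T ≤ t → |G t| ≤ |G T| + (ε / 4) * Real.exp t := by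
    intro t ht
    have hu := hup (Set.self_mem_Ici) (Set.mem_Ici.2 ht) ht
    have hd := hdown (Set.self_mem_Ici) (Set.mem_Ici.2 ht) ht
    simp only at hu hd
    have hTexp : (0 : ℝ) < Real.exp T := Real.exp_pos T
    have habsT1 : G T ≤ |G T| := le_abs_self _
    have habsT2 : -|G T| ≤ G T := neg_abs_le _
    rw [abs_le]
    constructor <;> nlinarith
  -- choose `T'` so that `exp (-t) * |G T| < ε/4` for `t ≥ T'`
  have htend : Tendsto (fun t : ℝ => Real.exp (-t) * |G T|) atTop (nhds 0) := by
    simpa using Real.tendsto_exp_neg_atTop_nhds_zero.mul_const |G T|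
  rw [Metric.tendsto_atTop] at htend
  obtain ⟨T', hT'⟩ := htend (ε / 4) (by positivity)
  refine ⟨max T T', fun t ht => ?_⟩
  have ht1 : T ≤ t := le_trans (le_max_left _ _) ht
  have ht2 : T' ≤ t := le_trans (le_max_right _ _) ht
  have h1 := hGb t ht1
  have h2 := hT' t ht2
  rw [Real.dist_eq, sub_zero] at h2
  have h2' : Real.exp (-t) * |G T| < ε / 4 := by
    rwa [abs_of_nonneg (by positivity)] at h2
  have hexp : (0 : ℝ) < Real.exp t := Real.exp_pos t
  have hxL : x t - L = Real.exp (-t) * G t := by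
    rw [hG]; simp only [Real.exp_neg]
    field_simp
  rw [Real.dist_eq, hxL, abs_mul, abs_of_nonneg (le_of_lt (Real.exp_pos (-t)))]
  have hexpneg : Real.exp (-t) * |G t| ≤ Real.exp (-t) * (|G T| + (ε / 4) * Real.exp t) :=
    mul_le_mul_of_nonneg_left h1 (le_of_lt (Real.exp_pos (-t)))
  have hcalc : Real.exp (-t) * ((ε / 4) * Real.exp t) = ε / 4 := by
    rw [Real.exp_neg]; field_simp
  calc Real.exp (-t) * |G t| ≤ Real.exp (-t) * |G T| + Real.exp (-t) * ((ε / 4) * Real.exp t) := by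
        rw [← mul_add]; exact hexpneg
    _ < ε / 4 + ε / 4 := by rw [hcalc]; linarith
    _ < ε := by linarith

/-- every solution of the ODE `Q̇(t) = h(Q(t))` whose initial condition
has the correct terminal components `γ_N(0)(i,a) = g_N(i)` converges, as `t → ∞`, to
the DP solution `Q*`. -/
theorem ode_converges_to_dp_solution {S A : Type*} [Fintype S] [Nonempty S]
    [Fintype A] [Nonempty A]
    (N : ℕ) (hN : 1 ≤ N)
    (p g : ℕ → S → A → S → ℝ) (gN : S → ℝ)
    (hp0 : ∀ n < N, ∀ i a j, 0 ≤ p n i a j)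
    (hp1 : ∀ n < N, ∀ i a, ∑ j, p n i a j = 1)
    (Qs : Fin (N + 1) × S × A → ℝ)
    (hQsN : ∀ (i : S) (a : A), Qs (Fin.last N, i, a) = gN i)
    (hQsrec : ∀ (n : Fin (N + 1)) (hn : (n : ℕ) < N), ∀ (s : S) (a : A),
      Qs (n, s, a) = ∑ j, p n s a j *
        (g n s a j + ⨅ b : A, Qs (⟨(n : ℕ) + 1, by omega⟩, j, b)))
    (γ : ℝ → Fin (N + 1) × S × A → ℝ)
    (hγ : ∀ t : ℝ, 0 ≤ t → HasDerivAt γ (hvec N p g (γ t)) t)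
    (hγ0 : ∀ (i : S) (a : A), γ 0 (Fin.last N, i, a) = gN i) :
    Tendsto γ atTop (nhds Qs) := by
  -- componentwise derivatives
  have hcomp : ∀ (x : Fin (N + 1) × S × A) (t : ℝ), 0 ≤ t →
      HasDerivAt (fun s => γ s x) (hvec N p g (γ t) x) t := by
    intro x t ht
    exact hasDerivAt_pi.1 (hγ t ht) x
  -- main claim, by induction on the "distance to the horizon"
  have key : ∀ m : ℕ, ∀ n : Fin (N + 1), (n : ℕ) + m = N → ∀ (i : S) (a : A),
      Tendsto (fun t => γ t (n, i, a)) atTop (nhds (Qs (n, i, a))) := by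
    intro m
    induction m with
    | zero =>
      intro n hn i a
      have hnl : n = Fin.last N := by
        apply Fin.ext; simpa using hn
      subst hnl
      -- derivative is zero, so the component is constant on `[0, ∞)`
      have hz : ∀ t : ℝ, 0 ≤ t → HasDerivAt (fun s => γ s (Fin.last N, i, a)) 0 t := by
        intro t ht
        have := hcomp (Fin.last N, i, a) t ht
        simpa [hvec] using this
      have hconst : ∀ t : ℝ, 0 ≤ t → γ t (Fin.last N, i, a) = γ 0 (Fin.last N, i, a) := by
        intro t ht
        have := constant_of_has_deriv_right_zero (f := fun s => γ s (Fin.last N, i, a))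
          (a := 0) (b := t)
          (fun s hs => ((hz s hs.1).continuousAt).continuousWithinAt)
          (fun s hs => (hz s hs.1).hasDerivWithinAt)
        exact this t ⟨ht, le_refl t⟩
      have : Qs (Fin.last N, i, a) = γ 0 (Fin.last N, i, a) := by
        rw [hQsN i a, hγ0 i a]
      rw [this]
      apply Tendsto.congr' _ tendsto_const_nhds
      filter_upwards [eventually_ge_atTop (0 : ℝ)] with t ht
      exact (hconst t ht).symm
    | succ m ih =>
      intro n hn i a
      have hnN : (n : ℕ) < N := by omega
      set n1 : Fin (N + 1) := ⟨(n : ℕ) + 1, by omega⟩ with hn1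
      have hn1m : (n1 : ℕ) + m = N := by simp [hn1]; omega
      -- the forcing term
      set F : ℝ → ℝ := fun t => ∑ j, p n i a j *
          (g n i a j + ⨅ b : A, γ t (n1, j, b)) with hF
      have hder : ∀ t : ℝ, 0 ≤ t →
          HasDerivAt (fun s => γ s (n, i, a)) (F t - γ t (n, i, a)) t := by
        intro t ht
        have := hcomp (n, i, a) t ht
        simpa [hvec, hnN, hF, hn1] using this
      have hFtend : Tendsto F atTop (nhds (Qs (n, i, a))) := by
        rw [hQsrec n hnN i a]
        apply tendsto_finset_sum
        intro j _
        apply Tendsto.const_mul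
        apply Tendsto.const_add
        have h1 : ∀ t : ℝ, (⨅ b : A, γ t (n1, j, b)) =
            Finset.univ.inf' Finset.univ_nonempty (fun b : A => γ t (n1, j, b)) := by
          intro t; rw [Finset.inf'_univ_eq_ciInf]
        have h2 : (⨅ b : A, Qs (n1, j, b)) =
            Finset.univ.inf' Finset.univ_nonempty (fun b : A => Qs (n1, j, b)) := by
          rw [Finset.inf'_univ_eq_ciInf]
        change Tendsto _ atTop (nhds (⨅ b : A, Qs (n1, j, b)))
        simp only [h1, h2]
        exact Filter.Tendsto.finset_inf'_nhds_apply Finset.univ_nonempty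
          (fun b _ => ih n1 hn1m j b)
      exact ode_scalar_tendsto _ F (Qs (n, i, a)) hder hFtend
  rw [tendsto_pi_nhds]
  rintro ⟨n, i, a⟩
  exact key (N - (n : ℕ)) n (by omega) i a

end
end

section
/- The Q-learning noise terms form a martingale difference sequence with respect to the sample filtration: for every m ≥ 0 and every component (n,i,a), the random variable M^{m+1}_n(i,a) is square-integrable and its conditional expectation with respect to F_m is zero almost surely, where F_m is the σ-algebra generated by the samples {η_{n'}^{l}(i',a') : l < m, n' < N, i' ∈ S, a' ∈ A}. -/
open Finset MeasureTheory ProbabilityTheory Filter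

noncomputable section

/-- The finite-horizon Q-learning iterates `Q^m_n(i,a)(ω)`.
`Qiter N g gN step η Q0 m n i a ω = Q^m_n(i,a)(ω)`, defined by
`Q^0 = Q0` and, for `n < N`,
`Q^{m+1}_n(i,a) = Q^m_n(i,a) + a(m)(g_n(i,a,η_n^m(i,a)) + min_b Q^m_{n+1}(η_n^m(i,a),b) − Q^m_n(i,a))`,
with `Q^{m+1}_N(i,a) = g_N(i)`. -/
def Qiter {S A Ω : Type*} [Fintype A] [Nonempty A] (N : ℕ)
    (g : ℕ → S → A → S → ℝ) (gN : S → ℝ) (step : ℕ → ℝ)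
    (η : ℕ → Fin N → S → A → Ω → S) (Q0 : ℕ → S → A → ℝ) :
    ℕ → ℕ → S → A → Ω → ℝ
  | 0, n, i, a, _ => Q0 n i a
  | m + 1, n, i, a, ω =>
      if h : n < N then
        Qiter N g gN step η Q0 m n i a ω +
          step m * (g n i a (η m ⟨n, h⟩ i a ω) +
            (⨅ b : A, Qiter N g gN step η Q0 m (n + 1) (η m ⟨n, h⟩ i a ω) b ω) -
            Qiter N g gN step η Q0 m n i a ω)
      else gN i

/-- The Q-learning noise `M^{m+1}_n(i,a)(ω)` (with `Mnoise … m` denoting `M^{m+1}`):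
for `n < N` it equals
`g_n(i,a,η_n^m(i,a)) + min_b Q^m_{n+1}(η_n^m(i,a),b)
  − Σ_j p_n(i,a,j)(g_n(i,a,j) + min_b Q^m_{n+1}(j,b))`,
and it vanishes for `n = N`. -/
def Mnoise {S A Ω : Type*} [Fintype S] [Fintype A] [Nonempty A] (N : ℕ)
    (p g : ℕ → S → A → S → ℝ) (gN : S → ℝ) (step : ℕ → ℝ)
    (η : ℕ → Fin N → S → A → Ω → S) (Q0 : ℕ → S → A → ℝ)
    (m n : ℕ) (i : S) (a : A) (ω : Ω) : ℝ :=
  if h : n < N then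
    g n i a (η m ⟨n, h⟩ i a ω) +
      (⨅ b : A, Qiter N g gN step η Q0 m (n + 1) (η m ⟨n, h⟩ i a ω) b ω) -
      ∑ j, p n i a j * (g n i a j + ⨅ b : A, Qiter N g gN step η Q0 m (n + 1) j b ω)
  else 0

/-- The σ-algebra `F_m` generated by the samples `η_{n'}^l(i',a')` for `l < m`. -/
def filt {S A Ω : Type*} [MeasurableSpace S] (N : ℕ)
    (η : ℕ → Fin N → S → A → Ω → S) (m : ℕ) : MeasurableSpace Ω :=
  ⨆ (l : ℕ) (_ : l < m) (n : Fin N) (i : S) (a : A),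
    MeasurableSpace.comap (η l n i a) inferInstance

/-!
For `n < N` the noise is `F (X ω) ω - ∑ j, P(X = j) * F j ω`, where `X = η_n^m(i,a)` is the fresh
sample and `F j = g_n(i,a,j) + min_b Q^m_{n+1}(j,b)`. Each `F j` is `F_m`-measurable and bounded
(by induction on `m`, since `A` and `S` are finite), while `X` is independent of `F_m`. Writing
`F (X ω) ω = ∑ j, F j ω * 1{X ω = j}` and pulling the `F_m`-measurable factors out of the
conditional expectation shows `E[F (X ·) · | F_m] = ∑ j, P(X = j) * F j`.
-/

open scoped ENNReal

lemma exists_abs_le_of_finite {ι α : Type*} [Finite ι] {f : ι → α → ℝ}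
    (h : ∀ x, ∃ C, ∀ y, |f x y| ≤ C) : ∃ C, ∀ x y, |f x y| ≤ C := by
  choose C hC using h
  obtain ⟨D, hD⟩ := Finite.exists_le C
  exact ⟨D, fun x y => (hC x y).trans (hD x)⟩

lemma abs_ciInf_le_of_forall_abs_le {ι : Type*} [Finite ι] [Nonempty ι] {f : ι → ℝ} {C : ℝ}
    (h : ∀ b, |f b| ≤ C) : |⨅ b, f b| ≤ C := by
  obtain ⟨b, hb⟩ := exists_eq_ciInf_of_finite (f := f)
  exact hb ▸ h b

section Freezing

variable {Ω S : Type*} {X : Ω → S} {F : S → Ω → ℝ}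

lemma measurable_apply_of_countable [MeasurableSpace S] [Countable S] [MeasurableSingletonClass S]
    {mΩ : MeasurableSpace Ω} (hX : Measurable X) (hF : ∀ j, Measurable (F j)) :
    Measurable fun ω => F (X ω) ω :=
  (measurable_from_prod_countable_left (f := fun x : Ω × S => F x.2 x.1) hF).comp
    (measurable_id.prodMk hX)

lemma apply_eq_sum_mul_indicator [Fintype S] :
    (fun ω => F (X ω) ω) = ∑ j, F j * (X ⁻¹' {j}).indicator 1 := by
  classical
  funext ω
  simp [Set.indicator_apply]

variable [MeasurableSpace S] [MeasurableSingletonClass S] {𝓕 m₀ : MeasurableSpace Ω}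
  {μ : Measure Ω}

lemma integrable_mul_indicator_preimage (hX : Measurable X) (hFi : ∀ j, Integrable (F j) μ)
    (j : S) : Integrable (F j * (X ⁻¹' {j}).indicator 1) μ := by
  have hind : F j * (X ⁻¹' {j}).indicator 1 = (X ⁻¹' {j}).indicator (F j) := by
    ext ω
    by_cases h : X ω = j <;> simp [h]
  exact hind ▸ (hFi j).indicator (hX (measurableSet_singleton j))

variable [Fintype S]

lemma integrable_apply (hX : Measurable X) (hFi : ∀ j, Integrable (F j) μ) :
    Integrable (fun ω => F (X ω) ω) μ := by
  rw [apply_eq_sum_mul_indicator]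
  exact integrable_finsetSum' _ fun j _ => integrable_mul_indicator_preimage hX hFi j

theorem condExp_apply_eq_sum_of_indep [IsFiniteMeasure μ] (h𝓕 : 𝓕 ≤ m₀) (hX : Measurable X)
    (hind : Indep (MeasurableSpace.comap X inferInstance) 𝓕 μ) (hF : ∀ j, Measurable[𝓕] (F j))
    (hFi : ∀ j, Integrable (F j) μ) :
    μ[fun ω => F (X ω) ω | 𝓕] =ᵐ[μ] fun ω => ∑ j, μ.real (X ⁻¹' {j}) * F j ω := by
  have hterm : ∀ j, μ[F j * (X ⁻¹' {j}).indicator 1 | 𝓕] =ᵐ[μ]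
      fun ω => μ.real (X ⁻¹' {j}) * F j ω := by
    intro j
    have hs : MeasurableSet[MeasurableSpace.comap X inferInstance] (X ⁻¹' {j}) :=
      comap_measurable X (measurableSet_singleton j)
    have hind_const := condExp_indep_eq (μ := μ) hX.comap_le h𝓕
      ((stronglyMeasurable_one (α := Ω) (β := ℝ)).indicator hs) hind
    filter_upwards [condExp_mul_of_stronglyMeasurable_left (hF j).stronglyMeasurable
      (integrable_mul_indicator_preimage hX hFi j)
      ((integrable_const 1).indicator (hX.comap_le _ hs)), hind_const] with ω hmul hconst
    rw [hmul, Pi.mul_apply, hconst, integral_indicator_one (hX.comap_le _ hs), mul_comm]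
  rw [apply_eq_sum_mul_indicator]
  filter_upwards [condExp_finsetSum (fun j _ => integrable_mul_indicator_preimage hX hFi j) 𝓕,
    ae_all_iff.2 hterm] with ω hsum hterms
  rw [hsum, Finset.sum_apply]
  exact Finset.sum_congr rfl fun j _ => hterms j

theorem condExp_apply_sub_sum_eq_zero_of_indep [IsFiniteMeasure μ] (h𝓕 : 𝓕 ≤ m₀)
    (hX : Measurable X) (hind : Indep (MeasurableSpace.comap X inferInstance) 𝓕 μ)
    (hF : ∀ j, Measurable[𝓕] (F j)) (hFi : ∀ j, Integrable (F j) μ) :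
    μ[fun ω => F (X ω) ω - ∑ j, μ.real (X ⁻¹' {j}) * F j ω | 𝓕] =ᵐ[μ] 0 := by
  have hmean_meas : StronglyMeasurable[𝓕] fun ω => ∑ j, μ.real (X ⁻¹' {j}) * F j ω :=
    (Finset.measurable_sum _ fun j _ => (hF j).const_mul _).stronglyMeasurable
  have hmean_int : Integrable (fun ω => ∑ j, μ.real (X ⁻¹' {j}) * F j ω) μ :=
    integrable_finsetSum _ fun j _ => (hFi j).const_mul _
  refine (condExp_sub (integrable_apply hX hFi) hmean_int 𝓕).trans ?_
  rw [condExp_of_stronglyMeasurable h𝓕 hmean_meas hmean_int]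
  filter_upwards [condExp_apply_eq_sum_of_indep h𝓕 hX hind hF hFi] with ω hfreeze
  rw [Pi.sub_apply, hfreeze, sub_self, Pi.zero_apply]

lemma memLp_apply_sub_sum [IsFiniteMeasure μ] {C : ℝ} (hX : Measurable X)
    (hF : ∀ j, Measurable (F j)) (hb : ∀ j ω, |F j ω| ≤ C) (q : S → ℝ) (p : ℝ≥0∞) :
    MemLp (fun ω => F (X ω) ω - ∑ j, q j * F j ω) p μ := by
  have hFp : ∀ j, MemLp (F j) p μ := fun j =>
    MemLp.of_bound (hF j).aestronglyMeasurable C (ae_of_all _ (hb j))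
  refine .sub (.of_bound (measurable_apply_of_countable hX hF).aestronglyMeasurable C
    (ae_of_all _ fun ω => hb _ ω)) (memLp_finsetSum _ fun j _ => (hFp j).const_mul (q j))

end Freezing

section Filtration

variable {S A Ω : Type*} [MeasurableSpace S] {N : ℕ} {η : ℕ → Fin N → S → A → Ω → S} {m : ℕ}

lemma filt_mono {m m' : ℕ} (h : m ≤ m') : filt (A := A) N η m ≤ filt N η m' :=
  iSup_le fun l => iSup_le fun hl => le_iSup_of_le l (le_iSup_of_le (hl.trans_le h) le_rfl)

lemma filt_le [MeasurableSpace Ω] (hmeas : ∀ m n i a, Measurable (η m n i a)) (m : ℕ) :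
    filt N η m ≤ ‹MeasurableSpace Ω› :=
  iSup_le fun l => iSup_le fun _ => iSup_le fun n => iSup_le fun i => iSup_le fun a =>
    (hmeas l n i a).comap_le

lemma measurable_eta_filt {l : ℕ} (hl : l < m) (n : Fin N) (i : S) (a : A) :
    Measurable[filt N η m] (η l n i a) :=
  measurable_iff_comap_le.2 <| le_iSup_of_le l <| le_iSup_of_le hl <| le_iSup_of_le n <|
    le_iSup_of_le i <| le_iSup_of_le a le_rfl

lemma indep_comap_eta_filt [MeasurableSpace Ω] {P : Measure Ω}
    (hmeas : ∀ m n i a, Measurable (η m n i a))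
    (hindep : iIndepFun (fun x : ℕ × Fin N × S × A => η x.1 x.2.1 x.2.2.1 x.2.2.2) P)
    {l : ℕ} (hml : m ≤ l) (n : Fin N) (i : S) (a : A) :
    Indep (MeasurableSpace.comap (η l n i a) inferInstance) (filt N η m) P := by
  have hdisj : Disjoint {x : ℕ × Fin N × S × A | ¬x.1 < m} {x | x.1 < m} :=
    Set.disjoint_left.mpr fun _ hx hx' => hx hx'
  refine indep_of_indep_of_le_right (indep_of_indep_of_le_left
    (indep_iSup_of_disjoint (fun x => (hmeas _ _ _ _).comap_le) hindep.iIndep hdisj) ?_) ?_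
  · exact le_iSup₂_of_le (l, n, i, a) (not_lt.2 hml) le_rfl
  · exact iSup_le fun l => iSup_le fun hl => iSup_le fun n => iSup_le fun i => iSup_le fun a =>
      le_iSup₂_of_le (l, n, i, a) hl le_rfl

end Filtration

def Qtarget {S A Ω : Type*} [Fintype A] [Nonempty A] (N : ℕ)
    (g : ℕ → S → A → S → ℝ) (gN : S → ℝ) (step : ℕ → ℝ)
    (η : ℕ → Fin N → S → A → Ω → S) (Q0 : ℕ → S → A → ℝ)
    (m n : ℕ) (i : S) (a : A) (j : S) (ω : Ω) : ℝ :=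
  g n i a j + ⨅ b : A, Qiter N g gN step η Q0 m (n + 1) j b ω

section QLearning

variable {S A Ω : Type*} [Fintype A] [Nonempty A] {N : ℕ} {g : ℕ → S → A → S → ℝ}
  {gN : S → ℝ} {step : ℕ → ℝ} {η : ℕ → Fin N → S → A → Ω → S} {Q0 : ℕ → S → A → ℝ}
  {m n : ℕ} {i : S} {a : A}

lemma Qiter_succ_of_lt (h : n < N) :
    Qiter N g gN step η Q0 (m + 1) n i a = fun ω =>
      Qiter N g gN step η Q0 m n i a ω + step m *
        (Qtarget N g gN step η Q0 m n i a (η m ⟨n, h⟩ i a ω) ω -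
          Qiter N g gN step η Q0 m n i a ω) := by
  funext ω
  rw [Qiter, dif_pos h]
  rfl

lemma Qiter_succ_of_not_lt (h : ¬n < N) :
    Qiter N g gN step η Q0 (m + 1) n i a = fun _ => gN i := by
  funext ω
  rw [Qiter, dif_neg h]

lemma Mnoise_eq_of_lt [Fintype S] {p : ℕ → S → A → S → ℝ} (h : n < N) :
    Mnoise N p g gN step η Q0 m n i a = fun ω =>
      Qtarget N g gN step η Q0 m n i a (η m ⟨n, h⟩ i a ω) ω -
        ∑ j, p n i a j * Qtarget N g gN step η Q0 m n i a j ω := by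
  funext ω
  rw [Mnoise, dif_pos h]
  rfl

lemma Mnoise_eq_zero_of_not_lt [Fintype S] {p : ℕ → S → A → S → ℝ} (h : ¬n < N) :
    Mnoise N p g gN step η Q0 m n i a = 0 :=
  funext fun _ => dif_neg h

lemma exists_abs_Qtarget_le [Finite S]
    (hQ : ∀ j b, ∃ C, ∀ ω, |Qiter N g gN step η Q0 m (n + 1) j b ω| ≤ C) :
    ∃ C, ∀ j ω, |Qtarget N g gN step η Q0 m n i a j ω| ≤ C := by
  obtain ⟨C, hC⟩ := exists_abs_le_of_finite fun x : S × A => hQ x.1 x.2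
  obtain ⟨G, hG⟩ := Finite.exists_le fun j => |g n i a j|
  exact ⟨G + C, fun j ω => (abs_add_le _ _).trans
    (add_le_add (hG j) (abs_ciInf_le_of_forall_abs_le fun b => hC (j, b) ω))⟩

lemma exists_abs_Qiter_le [Finite S] (m n : ℕ) (i : S) (a : A) :
    ∃ C, ∀ ω, |Qiter N g gN step η Q0 m n i a ω| ≤ C := by
  induction m generalizing n i a with
  | zero => exact ⟨|Q0 n i a|, fun _ => le_rfl⟩
  | succ m ih =>
    by_cases h : n < N
    · obtain ⟨C, hC⟩ := ih n i a
      obtain ⟨T, hT⟩ := exists_abs_Qtarget_le (i := i) (a := a) fun j b => ih (n + 1) j b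
      refine ⟨C + |step m| * (T + C), fun ω => ?_⟩
      rw [Qiter_succ_of_lt h]
      calc _ ≤ |Qiter N g gN step η Q0 m n i a ω| + |step m| *
            (|Qtarget N g gN step η Q0 m n i a (η m ⟨n, h⟩ i a ω) ω| +
              |Qiter N g gN step η Q0 m n i a ω|) := by
            refine (abs_add_le _ _).trans ?_
            rw [abs_mul]
            gcongr
            exact abs_sub _ _
        _ ≤ C + |step m| * (T + C) := by gcongr; exacts [hC ω, hT _ ω, hC ω]
    · exact ⟨|gN i|, fun ω => by rw [Qiter_succ_of_not_lt h]⟩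

lemma measurable_Qtarget {M : MeasurableSpace Ω}
    (hQ : ∀ j b, Measurable[M] (Qiter N g gN step η Q0 m (n + 1) j b)) (j : S) :
    Measurable[M] (Qtarget N g gN step η Q0 m n i a j) :=
  measurable_const.add (Measurable.iInf fun b => hQ j b)

variable [MeasurableSpace S]

lemma measurable_Qiter_filt [Countable S] [MeasurableSingletonClass S] (m n : ℕ) (i : S) (a : A) :
    Measurable[filt N η m] (Qiter N g gN step η Q0 m n i a) := by
  induction m generalizing n i a with
  | zero => exact measurable_const
  | succ m ih =>
    have hQ : ∀ n i a, Measurable[filt N η (m + 1)] (Qiter N g gN step η Q0 m n i a) :=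
      fun n i a => (ih n i a).mono (filt_mono m.le_succ) le_rfl
    by_cases h : n < N
    · rw [Qiter_succ_of_lt h]
      exact (hQ n i a).add (measurable_const.mul ((measurable_apply_of_countable
        (measurable_eta_filt m.lt_succ_self _ i a) (measurable_Qtarget fun j b => hQ _ j b)).sub
        (hQ n i a)))
    · rw [Qiter_succ_of_not_lt h]
      exact measurable_const

end QLearning

theorem noise_is_martingale_difference_general
    {S A Ω : Type*} [Fintype S] [MeasurableSpace S]
    [MeasurableSingletonClass S] [Fintype A] [Nonempty A] [MeasurableSpace Ω]
    (N : ℕ)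
    (p g : ℕ → S → A → S → ℝ) (gN : S → ℝ)
    (hp0 : ∀ n < N, ∀ i a j, 0 ≤ p n i a j)
    (P : Measure Ω) [IsProbabilityMeasure P]
    (η : ℕ → Fin N → S → A → Ω → S)
    (hmeas : ∀ m n i a, Measurable (η m n i a))
    (hdist : ∀ (m : ℕ) (n : Fin N) (i : S) (a : A) (j : S),
      P {ω | η m n i a ω = j} = ENNReal.ofReal (p n i a j))
    (hindep : iIndepFun
      (fun x : ℕ × Fin N × S × A => η x.1 x.2.1 x.2.2.1 x.2.2.2) P)
    (step : ℕ → ℝ)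
    (Q0 : ℕ → S → A → ℝ)
    (m n : ℕ) (i : S) (a : A) :
    MemLp (Mnoise N p g gN step η Q0 m n i a) 2 P ∧
      P[Mnoise N p g gN step η Q0 m n i a|filt N η m] =ᵐ[P] 0 := by
  by_cases hlt : n < N
  swap
  · rw [Mnoise_eq_zero_of_not_lt hlt]
    exact ⟨MemLp.zero, condExp_zero.eventuallyEq⟩
  obtain ⟨C, hC⟩ : ∃ C, ∀ j ω, |Qtarget N g gN step η Q0 m n i a j ω| ≤ C :=
    exists_abs_Qtarget_le fun j b => exists_abs_Qiter_le m (n + 1) j b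
  have hF : ∀ j, Measurable[filt N η m] (Qtarget N g gN step η Q0 m n i a j) :=
    measurable_Qtarget fun j b => measurable_Qiter_filt m (n + 1) j b
  have hFi : ∀ j, Integrable (Qtarget N g gN step η Q0 m n i a j) P := fun j =>
    .of_bound ((hF j).mono (filt_le hmeas m) le_rfl).aestronglyMeasurable C (ae_of_all _ (hC j))
  have hq : ∀ j, P.real (η m ⟨n, hlt⟩ i a ⁻¹' {j}) = p n i a j := fun j => by
    rw [measureReal_def, ← ENNReal.toReal_ofReal (hp0 n hlt i a j), ← hdist m ⟨n, hlt⟩ i a j]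
    rfl
  rw [Mnoise_eq_of_lt hlt]
  refine ⟨memLp_apply_sub_sum (hmeas m ⟨n, hlt⟩ i a)
    (fun j => (hF j).mono (filt_le hmeas m) le_rfl) hC _ 2, ?_⟩
  simpa only [hq] using condExp_apply_sub_sum_eq_zero_of_indep (filt_le hmeas m)
    (hmeas m ⟨n, hlt⟩ i a) (indep_comap_eta_filt hmeas hindep le_rfl ⟨n, hlt⟩ i a) hF hFi

/-- the Q-learning noise terms form a square-integrable martingale
difference sequence with respect to the sample filtration. -/
theorem noise_is_martingale_difference
    {S A Ω : Type*} [Fintype S] [Nonempty S] [MeasurableSpace S]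
    [MeasurableSingletonClass S] [Fintype A] [Nonempty A] [MeasurableSpace Ω]
    (N : ℕ) (hN : 1 ≤ N)
    (p g : ℕ → S → A → S → ℝ) (gN : S → ℝ)
    (hp0 : ∀ n < N, ∀ i a j, 0 ≤ p n i a j)
    (hp1 : ∀ n < N, ∀ i a, ∑ j, p n i a j = 1)
    (P : Measure Ω) [IsProbabilityMeasure P]
    (η : ℕ → Fin N → S → A → Ω → S)
    (hmeas : ∀ m n i a, Measurable (η m n i a))
    (hdist : ∀ (m : ℕ) (n : Fin N) (i : S) (a : A) (j : S),
      P {ω | η m n i a ω = j} = ENNReal.ofReal (p n i a j))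
    (hindep : iIndepFun
      (fun x : ℕ × Fin N × S × A => η x.1 x.2.1 x.2.2.1 x.2.2.2) P)
    (step : ℕ → ℝ) (hstep : ∀ m, 0 < step m)
    (Q0 : ℕ → S → A → ℝ) (hQ0N : ∀ i a, Q0 N i a = gN i)
    (m n : ℕ) (hn : n ≤ N) (i : S) (a : A) :
    MemLp (Mnoise N p g gN step η Q0 m n i a) 2 P ∧
      P[Mnoise N p g gN step η Q0 m n i a|filt N η m] =ᵐ[P] 0 :=
  noise_is_martingale_difference_general N p g gN hp0 P η hmeas hdist hindep step Q0 m n i a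

end
end

section
/- The finite-horizon Q-learning iterates are stable: almost surely, sup_{m≥0} ‖Q^m‖ < ∞, where ‖·‖ is the sup norm over all components (n,i,a). -/
open Finset MeasureTheory ProbabilityTheory Filter

noncomputable section

/-!
The iterates are in fact bounded for every `ω`. Square-summable step sizes are eventually in
`[0, 1]`, and from then on each update replaces `Q^m_n(i,a)` by a convex combination of itself and
the target `g_n(i,a,η) + min_b Q^m_{n+1}(η,b)`. A bound on level `n + 1` thus bounds the targets,
hence level `n`, and backward induction from the terminal level `N` (where `Q^m_N = g_N` once
`m ≥ 1`) bounds all levels.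
-/

lemma exists_forall_le_of_finite {ι α : Type*} [Finite ι] (f : ι → α → ℝ)
    (h : ∀ i, ∃ C, ∀ x, f i x ≤ C) : ∃ C, ∀ i x, f i x ≤ C := by
  choose C hC using h
  obtain ⟨C', hC'⟩ := Finite.exists_le C
  exact ⟨C', fun i x => (hC i x).trans (hC' i)⟩

lemma abs_ciInf_le_of_forall {ι : Type*} [Finite ι] [Nonempty ι] {f : ι → ℝ} {B : ℝ}
    (h : ∀ i, |f i| ≤ B) : |⨅ i, f i| ≤ B := by
  obtain ⟨i, hi⟩ := exists_eq_ciInf_of_finite (f := f)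
  exact hi ▸ h i

lemma abs_add_mul_sub_le {q x s M : ℝ} (hs : s ∈ Set.Icc 0 1) (hq : |q| ≤ M)
    (hx : |x| ≤ M) : |q + s * (x - q)| ≤ M := by
  obtain ⟨hs0, hs1⟩ := hs
  rw [abs_le] at *
  constructor <;> nlinarith

lemma exists_abs_le_of_relaxation {q x s : ℕ → ℝ} {D : ℝ} (hx : ∀ m, |x m| ≤ D)
    (hs : ∀ᶠ m in atTop, s m ∈ Set.Icc 0 1)
    (hq : ∀ m, q (m + 1) = q m + s m * (x m - q m)) :
    ∃ C, ∀ m, |q m| ≤ C := by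
  obtain ⟨m₀, hm₀⟩ := eventually_atTop.1 hs
  have tail : ∀ m ≥ m₀, |q m| ≤ max |q m₀| D := by
    intro m hm
    induction m, hm using Nat.le_induction with
    | base => exact le_max_left _ _
    | succ m hm ih =>
      exact hq m ▸ abs_add_mul_sub_le (hm₀ m hm) ih ((hx m).trans (le_max_right _ _))
  have head : ∀ m ≤ m₀, |q m| ≤ ∑ k ∈ range (m₀ + 1), |q k| := fun m hm =>
    single_le_sum (fun k _ => abs_nonneg (q k)) (mem_range.2 (Nat.lt_succ_of_le hm))
  refine ⟨max (∑ k ∈ range (m₀ + 1), |q k|) D, fun m => ?_⟩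
  rcases le_total m m₀ with hm | hm
  · exact (head m hm).trans (le_max_left _ _)
  · exact (tail m hm).trans (max_le_max_right D (head m₀ le_rfl))

section Qiter

variable {S A Ω : Type*} [Fintype S] [Fintype A] [Nonempty A] {N : ℕ}
  {g : ℕ → S → A → S → ℝ} {gN : S → ℝ} {step : ℕ → ℝ}
  {η : ℕ → Fin N → S → A → Ω → S} {Q0 : ℕ → S → A → ℝ}

lemma exists_abs_Qiter_terminal_le (ω : Ω) :
    ∃ C, ∀ m i a, |Qiter N g gN step η Q0 m N i a ω| ≤ C := by
  obtain ⟨C, hC⟩ := exists_forall_le_of_finite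
    (fun ia : S × A => fun m => |Qiter N g gN step η Q0 m N ia.1 ia.2 ω|) fun ia =>
      ⟨max |Q0 N ia.1 ia.2| |gN ia.1|, fun m => by cases m <;> simp [Qiter]⟩
  exact ⟨C, fun m i a => hC (i, a) m⟩

lemma exists_abs_Qiter_le_of_succ (hstep : ∀ᶠ m in atTop, step m ∈ Set.Icc 0 1)
    {n : ℕ} (hn : n < N) {ω : Ω} {B : ℝ}
    (hB : ∀ m j b, |Qiter N g gN step η Q0 m (n + 1) j b ω| ≤ B) :
    ∃ C, ∀ m i a, |Qiter N g gN step η Q0 m n i a ω| ≤ C := by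
  obtain ⟨G, hG⟩ := Finite.exists_le fun x : S × A × S => |g n x.1 x.2.1 x.2.2|
  have target_le : ∀ m i a, |g n i a (η m ⟨n, hn⟩ i a ω) +
      ⨅ b, Qiter N g gN step η Q0 m (n + 1) (η m ⟨n, hn⟩ i a ω) b ω| ≤ G + B :=
    fun m i a => (abs_add_le _ _).trans <|
      add_le_add (hG (i, a, _)) (abs_ciInf_le_of_forall fun b => hB m _ b)
  obtain ⟨C, hC⟩ := exists_forall_le_of_finite
    (fun ia : S × A => fun m => |Qiter N g gN step η Q0 m n ia.1 ia.2 ω|) fun ia =>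
      exists_abs_le_of_relaxation (target_le · ia.1 ia.2) hstep fun m => by
        simp only [Qiter, dif_pos hn]
  exact ⟨C, fun m i a => hC (i, a) m⟩

end Qiter

theorem q_learning_iterates_stable_general
    {S A Ω : Type*} [Fintype S] [Fintype A] [Nonempty A] [MeasurableSpace Ω]
    (N : ℕ)
    (g : ℕ → S → A → S → ℝ) (gN : S → ℝ)
    (P : Measure Ω)
    (η : ℕ → Fin N → S → A → Ω → S)
    (step : ℕ → ℝ) (hstep : ∀ m, 0 < step m)
    (hstep_sq : Summable (fun m => (step m) ^ 2))
    (Q0 : ℕ → S → A → ℝ) :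
    ∀ᵐ ω ∂P, ∃ C : ℝ, ∀ m n : ℕ, n ≤ N → ∀ (i : S) (a : A),
      |Qiter N g gN step η Q0 m n i a ω| ≤ C := by
  have hstep01 : ∀ᶠ m in atTop, step m ∈ Set.Icc 0 1 := by
    filter_upwards [hstep_sq.tendsto_atTop_zero.eventually (eventually_le_nhds zero_lt_one)]
      with m hm
    exact ⟨(hstep m).le, (pow_le_one_iff_of_nonneg (hstep m).le two_ne_zero).1 hm⟩
  refine Eventually.of_forall fun ω => ?_
  have levels : ∀ n ≤ N, ∃ C, ∀ m n', n ≤ n' → n' ≤ N → ∀ i a,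
      |Qiter N g gN step η Q0 m n' i a ω| ≤ C := by
    intro n hn
    induction hn using Nat.decreasingInduction with
    | self =>
      obtain ⟨C, hC⟩ :=
        exists_abs_Qiter_terminal_le (g := g) (step := step) (η := η) (Q0 := Q0) ω
      exact ⟨C, fun m n' h₁ h₂ => le_antisymm h₂ h₁ ▸ hC m⟩
    | of_succ n hn ih =>
      obtain ⟨B, hB⟩ := ih
      obtain ⟨C, hC⟩ := exists_abs_Qiter_le_of_succ hstep01 hn (hB · (n + 1) le_rfl hn)
      refine ⟨max C B, fun m n' h₁ h₂ i a => ?_⟩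
      rcases h₁.eq_or_lt with rfl | h₁
      · exact (hC m i a).trans (le_max_left _ _)
      · exact (hB m n' h₁ h₂ i a).trans (le_max_right _ _)
  obtain ⟨C, hC⟩ := levels 0 N.zero_le
  exact ⟨C, fun m n hn => hC m n n.zero_le hn⟩

/-- the finite-horizon Q-learning iterates are stable: almost surely,
`sup_m ‖Q^m‖ < ∞` (the sup norm being over all components `(n,i,a)`). -/
theorem q_learning_iterates_stable
    {S A Ω : Type*} [Fintype S] [Nonempty S] [MeasurableSpace S]
    [MeasurableSingletonClass S] [Fintype A] [Nonempty A] [MeasurableSpace Ω]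
    (N : ℕ) (hN : 1 ≤ N)
    (p g : ℕ → S → A → S → ℝ) (gN : S → ℝ)
    (hp0 : ∀ n < N, ∀ i a j, 0 ≤ p n i a j)
    (hp1 : ∀ n < N, ∀ i a, ∑ j, p n i a j = 1)
    (P : Measure Ω) [IsProbabilityMeasure P]
    (η : ℕ → Fin N → S → A → Ω → S)
    (hmeas : ∀ m n i a, Measurable (η m n i a))
    (hdist : ∀ (m : ℕ) (n : Fin N) (i : S) (a : A) (j : S),
      P {ω | η m n i a ω = j} = ENNReal.ofReal (p n i a j))
    (hindep : iIndepFun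
      (fun x : ℕ × Fin N × S × A => η x.1 x.2.1 x.2.2.1 x.2.2.2) P)
    (step : ℕ → ℝ) (hstep : ∀ m, 0 < step m)
    (hstep_sum : Tendsto (fun M => ∑ m ∈ Finset.range M, step m) atTop atTop)
    (hstep_sq : Summable (fun m => (step m) ^ 2))
    (Q0 : ℕ → S → A → ℝ) (hQ0N : ∀ i a, Q0 N i a = gN i) :
    ∀ᵐ ω ∂P, ∃ C : ℝ, ∀ m n : ℕ, n ≤ N → ∀ (i : S) (a : A),
      |Qiter N g gN step η Q0 m n i a ω| ≤ C :=
  q_learning_iterates_stable_general N g gN P η step hstep hstep_sq Q0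
end
end
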